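/- Let A := 𝒳̂ ∖ 𝒳; every state of A is a fixed point of the stopped dynamics (f̂(x,d) = x for x ∈ A). Then for every x₀ ∈ 𝒳̂, the probability of eventually reaching A equals the Cesàro limit of the expected occupation of A: ℙ^∞(∃k ∈ ℕ: φ̂_π^{x₀}(k) ∈ A) = lim_{k→∞} (1/k)·Σ_{i=0}^{k−1} 𝔼^∞[1_A(φ̂_π^{x₀}(i))], where 1_A is the indicator function of A. -/

import Mathlib

open MeasureTheory Filter Topology

noncomputable section

/-- Trajectory of the discrete-time system `x(l+1) = f(x(l), d(l))` under the
disturbance sequence `π`, starting from `x0`. -/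
def traj {n m : ℕ} (f : (Fin n → ℝ) → (Fin m → ℝ) → (Fin n → ℝ))
    (x0 : Fin n → ℝ) (π : ℕ → Fin m → ℝ) : ℕ → Fin n → ℝ
  | 0 => x0
  | k + 1 => f (traj f x0 π k) (π k)

/-- for the stopped system, the probability of eventually reaching the
absorbing set `A = 𝒳̂ ∖ 𝒳` equals the Cesàro limit of the expected occupation of `A`. -/
theorem statement_13 {n m : ℕ}
    (f : (Fin n → ℝ) → (Fin m → ℝ) → (Fin n → ℝ))
    (hf : Measurable fun p : (Fin n → ℝ) × (Fin m → ℝ) => f p.1 p.2)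
    (D : Set (Fin m → ℝ)) (hD : MeasurableSet D)
    (μ : Measure (Fin m → ℝ)) [IsProbabilityMeasure μ] (hμD : μ D = 1)
    (Pinf : Measure (ℕ → Fin m → ℝ)) [IsProbabilityMeasure Pinf]
    (hPinf : ∀ (s : Finset ℕ) (B : ℕ → Set (Fin m → ℝ)), (∀ i, MeasurableSet (B i)) →
      Pinf {π : ℕ → Fin m → ℝ | ∀ i ∈ s, π i ∈ B i} = ∏ i ∈ s, μ (B i))
    (X Xhat : Set (Fin n → ℝ))
    (hX : MeasurableSet X) (hXhat : MeasurableSet Xhat)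
    (hXXhat : X ⊆ Xhat)
    (hreach : ∀ x ∈ X, ∀ d ∈ D, f x d ∈ Xhat)
    (fhat : (Fin n → ℝ) → (Fin m → ℝ) → (Fin n → ℝ))
    (hfhat₁ : ∀ d, ∀ x ∈ X, fhat x d = f x d)
    (hfhat₂ : ∀ d, ∀ x ∉ X, fhat x d = x) :
    ∀ x0 ∈ Xhat,
      Tendsto (fun k : ℕ =>
          (∑ i ∈ Finset.range k,
              ∫ π, Set.indicator (Xhat \ X) (fun _ => (1 : ℝ)) (traj fhat x0 π i) ∂Pinf)
            / (k : ℝ)) atTop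
        (𝓝 ((Pinf {π : ℕ → Fin m → ℝ |
            ∃ k : ℕ, traj fhat x0 π k ∈ Xhat \ X}).toReal)) := by
  classical
  intro x0 _
  set A := Xhat \ X with hA
  have hAmeas : MeasurableSet A := hXhat.diff hX
  -- fhat is an if-then-else, hence measurable
  have hfhat_eq : ∀ x d, fhat x d = if x ∈ X then f x d else x := by
    intro x d
    by_cases hx : x ∈ X
    · simp [hx, hfhat₁ d x hx]
    · simp [hx, hfhat₂ d x hx]
  have hfhatm : Measurable fun p : (Fin n → ℝ) × (Fin m → ℝ) => fhat p.1 p.2 := by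
    have : (fun p : (Fin n → ℝ) × (Fin m → ℝ) => fhat p.1 p.2)
        = fun p => if p.1 ∈ X then f p.1 p.2 else p.1 := by
      funext p; exact hfhat_eq p.1 p.2
    rw [this]
    exact Measurable.ite (hX.preimage measurable_fst) hf measurable_fst
  -- trajectory measurable in π
  have htraj : ∀ i, Measurable fun π : ℕ → Fin m → ℝ => traj fhat x0 π i := by
    intro i
    induction i with
    | zero => exact measurable_const
    | succ k ih =>
      have : (fun π : ℕ → Fin m → ℝ => traj fhat x0 π (k + 1))
          = (fun p : (Fin n → ℝ) × (Fin m → ℝ) => fhat p.1 p.2)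
            ∘ (fun π => (traj fhat x0 π k, π k)) := rfl
      rw [this]
      exact hfhatm.comp (ih.prodMk (measurable_pi_apply k))
  set E : ℕ → Set (ℕ → Fin m → ℝ) := fun i => {π | traj fhat x0 π i ∈ A} with hE
  have hEmeas : ∀ i, MeasurableSet (E i) := fun i => hAmeas.preimage (htraj i)
  -- monotone
  have hmono : Monotone E := by
    refine monotone_nat_of_le_succ ?_
    intro i π hπ
    have hnotX : traj fhat x0 π i ∉ X := fun h => hπ.2 h
    show traj fhat x0 π (i + 1) ∈ A
    have : traj fhat x0 π (i + 1) = traj fhat x0 π i :=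
      hfhat₂ (π i) _ hnotX
    rw [this]; exact hπ
  -- integral = measure
  have hint : ∀ i, (∫ π, Set.indicator A (fun _ => (1 : ℝ)) (traj fhat x0 π i) ∂Pinf)
      = (Pinf (E i)).toReal := by
    intro i
    have : (fun π => Set.indicator A (fun _ => (1 : ℝ)) (traj fhat x0 π i))
        = Set.indicator (E i) (fun _ => (1 : ℝ)) := by
      funext π
      by_cases h : traj fhat x0 π i ∈ A
      · simp [Set.indicator_of_mem h, Set.indicator_of_mem (show π ∈ E i from h)]
      · simp [Set.indicator_of_notMem h, Set.indicator_of_notMem (show π ∉ E i from h)]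
    rw [this]
    rw [integral_indicator_const (1 : ℝ) (hEmeas i)]
    simp [smul_eq_mul, measureReal_def]
  -- union
  have hU : {π : ℕ → Fin m → ℝ | ∃ k : ℕ, traj fhat x0 π k ∈ Xhat \ X} = ⋃ i, E i := by
    ext π; simp [hE, hA, Set.mem_iUnion]
  -- measures tend to measure of union
  have htend : Tendsto (fun i => (Pinf (E i)).toReal) atTop
      (𝓝 ((Pinf (⋃ i, E i)).toReal)) := by
    have h1 : Tendsto (fun i => Pinf (E i)) atTop (𝓝 (Pinf (⋃ i, E i))) :=
      tendsto_measure_iUnion_atTop hmono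
    exact (ENNReal.tendsto_toReal (measure_ne_top Pinf _)).comp h1
  rw [hU]
  have := (htend.congr fun i => (hint i).symm).cesaro
  simpa [div_eq_inv_mul, smul_eq_mul] using this
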